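/- Let A and B be n×n complex matrices. Then the 2n×2n block matrix [[AAᴴ + BBᴴ, AB + BA],[(AB + BA)ᴴ, AᴴA + BᴴB]] is positive semidefinite; indeed it equals XXᴴ for X = [[A, B],[Bᴴ, Aᴴ]]. -/

import Mathlib

open Matrix
open scoped ComplexOrder

/-- `singularValues X j` is the `(j+1)`-th largest singular value of `X`, i.e. the
decreasingly ordered square roots of the eigenvalues of `Xᴴ * X`. -/
noncomputable def singularValues {m : ℕ} (X : Matrix (Fin m) (Fin m) ℂ) : Fin m → ℝ :=
  fun j => Real.sqrt
    ((Matrix.isHermitian_conjTranspose_mul_self X).eigenvalues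
      (Tuple.sort (Matrix.isHermitian_conjTranspose_mul_self X).eigenvalues j.rev))

/-- `matAbs X = |X|` is the positive semidefinite square root of `Xᴴ * X`. -/
noncomputable def matAbs {m : ℕ} (X : Matrix (Fin m) (Fin m) ℂ) : Matrix (Fin m) (Fin m) ℂ :=
  (Matrix.posSemidef_conjTranspose_mul_self X).1.eigenvectorUnitary.1 *
    Matrix.diagonal (((↑) : ℝ → ℂ) ∘ Real.sqrt ∘ (Matrix.posSemidef_conjTranspose_mul_self X).1.eigenvalues) *
    (star (Matrix.posSemidef_conjTranspose_mul_self X).1.eigenvectorUnitary : Matrix (Fin m) (Fin m) ℂ)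

/-- `dsum X Y = X ⊕ Y` is the block diagonal matrix with diagonal blocks `X` and `Y`. -/
noncomputable def dsum {m : ℕ} (X Y : Matrix (Fin m) (Fin m) ℂ) :
    Matrix (Fin (m + m)) (Fin (m + m)) ℂ :=
  Matrix.reindex finSumFinEquiv finSumFinEquiv (Matrix.fromBlocks X 0 0 Y)

/-- `matPosPart X = X⁺ = (|X| + X)/2`. -/
noncomputable def matPosPart {m : ℕ} (X : Matrix (Fin m) (Fin m) ℂ) : Matrix (Fin m) (Fin m) ℂ :=
  (2 : ℂ)⁻¹ • (matAbs X + X)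

/-- `matNegPart X = X⁻ = (|X| - X)/2`. -/
noncomputable def matNegPart {m : ℕ} (X : Matrix (Fin m) (Fin m) ℂ) : Matrix (Fin m) (Fin m) ℂ :=
  (2 : ℂ)⁻¹ • (matAbs X - X)

theorem Matrix.fromBlocks_mul_conjTranspose_self {l m n o α : Type*} [Fintype m] [Fintype n]
    [NonUnitalSemiring α] [StarRing α] (A : Matrix l m α) (B : Matrix l n α)
    (C : Matrix o m α) (D : Matrix o n α) :
    fromBlocks A B C D * (fromBlocks A B C D)ᴴ =
      fromBlocks (A * Aᴴ + B * Bᴴ) (A * Cᴴ + B * Dᴴ) (C * Aᴴ + D * Bᴴ) (C * Cᴴ + D * Dᴴ) := by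
  rw [fromBlocks_conjTranspose, fromBlocks_multiply]

/-- Let `A`, `B` be `n×n` complex matrices. Then the block matrix
`[[AAᴴ + BBᴴ, AB + BA], [(AB + BA)ᴴ, AᴴA + BᴴB]]` equals `X * Xᴴ` for
`X = [[A, B], [Bᴴ, Aᴴ]]`, and hence is positive semidefinite. -/
theorem stmt_16 {n : ℕ} (A B : Matrix (Fin n) (Fin n) ℂ) :
    Matrix.fromBlocks (A * Aᴴ + B * Bᴴ) (A * B + B * A) (A * B + B * A)ᴴ (Aᴴ * A + Bᴴ * B) =
      (Matrix.fromBlocks A B Bᴴ Aᴴ) * (Matrix.fromBlocks A B Bᴴ Aᴴ)ᴴ ∧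
    (Matrix.fromBlocks (A * Aᴴ + B * Bᴴ) (A * B + B * A) (A * B + B * A)ᴴ
      (Aᴴ * A + Bᴴ * B)).PosSemidef := by
  have hgram : Matrix.fromBlocks (A * Aᴴ + B * Bᴴ) (A * B + B * A) (A * B + B * A)ᴴ (Aᴴ * A + Bᴴ * B) =
      (Matrix.fromBlocks A B Bᴴ Aᴴ) * (Matrix.fromBlocks A B Bᴴ Aᴴ)ᴴ := by
    simp only [fromBlocks_mul_conjTranspose_self, conjTranspose_conjTranspose, conjTranspose_add,
      conjTranspose_mul, add_comm (Bᴴ * Aᴴ), add_comm (Bᴴ * B)]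
  exact ⟨hgram, hgram ▸ posSemidef_self_mul_conjTranspose _⟩
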